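/- Let n ≥ 2, let L₁, L₂ ⊂ V = 𝔽₂^{2n} be Lagrangian subspaces with κ = dim(L₁ ∩ L₂), and let 0 ≤ m ≤ n. Then the average of |S ∩ L₂|² over all m-dimensional isotropic subspaces S of V satisfying S ∩ L₁ = {0} equals μ(n,κ,m) := 1 + 3(1 − 2^{κ−n})·(2^m − 1)/(2^n − 1) + 2(1 − 2^{κ−n})(1 − 2^{κ−n+1})·((2^m − 1)(2^{m−1} − 1))/((2^n − 1)(2^{n−1} − 1)), and moreover μ(n,κ,m) ≤ 1 + 3·2^{m−n} + 2^{2m−2n+1}. -/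

import Mathlib

/-!
Write `N(T)` for the number of `m`-dimensional isotropic `S ⊇ T` with `S ∩ L₁ = 0`. For such a
`T` of dimension `k`, the vectors `c ∉ T` for which `T + ⟨c⟩` is again isotropic and transverse
to `L₁` are those of `T^⊥ ∖ (T + L₁)`, and there are `2^{2n-k} - 2^n` of them. Counting the pairs
`(S, c)` with `c ∈ S ∖ T` in two ways gives `N(T) (2^m - 2^k) = ∑_c N(T + ⟨c⟩)`, so by downward
induction on `k` the number `N(T)` depends only on `k`, and `N(T) = r_k N(0)` with
`r_k = ∏_{j<k} (2^m - 2^j) / (2^{2n-j} - 2^n)`.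

The numerator of the average is `∑_S |S ∩ L₂|² = ∑_{a,b ∈ L₂} N(⟨a, b⟩)`. Here `N(⟨a, b⟩)`
vanishes when `⟨a, b⟩` meets `L₁ ∩ L₂` and is `r_d N(0)` otherwise, `d = dim ⟨a, b⟩`; counting
the pairs of each kind gives `(1 + 3 (2^n - 2^κ) r₁ + (2^n - 2^κ)(2^n - 2^{κ+1}) r₂) N(0)`, which
is `μ(n,κ,m) N(0)`.
-/

/-- The field with two elements. -/
abbrev F2 := ZMod 2

/-- The phase space `V = 𝔽₂ⁿ × 𝔽₂ⁿ`. -/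
abbrev V (n : ℕ) : Type := (Fin n → F2) × (Fin n → F2)

/-- The symplectic form `[a,b] = aₓ·b_z + a_z·bₓ` on `V n`. -/
def symp {n : ℕ} (a b : V n) : F2 :=
  (∑ i, a.1 i * b.2 i) + (∑ i, a.2 i * b.1 i)

/-- A subspace is isotropic if the symplectic form vanishes on it. -/
def IsIsotropic {n : ℕ} (S : Submodule F2 (V n)) : Prop :=
  ∀ x ∈ S, ∀ y ∈ S, symp x y = 0

/-- A Lagrangian subspace is an isotropic subspace of dimension `n`. -/
def IsLagrangian {n : ℕ} (S : Submodule F2 (V n)) : Prop :=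
  IsIsotropic S ∧ Module.finrank F2 S = n

/-- The quantity `μ(n,κ,m)` of Lemma "mu":
`1 + 3(1−2^{κ−n})·(2^m−1)/(2^n−1)
 + 2(1−2^{κ−n})(1−2^{κ−n+1})·((2^m−1)(2^{m−1}−1))/((2^n−1)(2^{n−1}−1))`. -/
def mu (n κ m : ℕ) : ℚ :=
  1 + 3 * (1 - (2 : ℚ) ^ ((κ : ℤ) - (n : ℤ))) * (((2 : ℚ) ^ m - 1) / ((2 : ℚ) ^ n - 1))
    + 2 * (1 - (2 : ℚ) ^ ((κ : ℤ) - (n : ℤ))) * (1 - (2 : ℚ) ^ ((κ : ℤ) - (n : ℤ) + 1)) *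
        ((((2 : ℚ) ^ m - 1) * ((2 : ℚ) ^ ((m : ℤ) - 1) - 1)) /
          (((2 : ℚ) ^ n - 1) * ((2 : ℚ) ^ ((n : ℤ) - 1) - 1)))

open Module Submodule
open scoped Classical Finset

lemma Submodule.sup_span_singleton_inf_eq_bot_iff {K W : Type*} [Field K] [AddCommGroup W]
    [Module K W] {T L : Submodule K W} {c : W} (hTL : T ⊓ L = ⊥) (hc : c ∉ T) :
    (T ⊔ span K {c}) ⊓ L = ⊥ ↔ c ∉ T ⊔ L := by
  constructor
  · intro h hcTL
    obtain ⟨t, ht, l, hl, rfl⟩ := Submodule.mem_sup.1 hcTL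
    have hlT : l ∈ T ⊔ span K {t + l} := by
      simpa using sub_mem (mem_sup_right (mem_span_singleton_self (t + l))) (mem_sup_left ht)
    have hl' : l ∈ (T ⊔ span K {t + l}) ⊓ L := ⟨hlT, hl⟩
    rw [h, mem_bot] at hl'
    exact hc (by simpa [hl'] using ht)
  · refine fun hcTL => eq_bot_iff.2 fun x ⟨hxc, hxL⟩ => ?_
    obtain ⟨t, ht, _, hu, rfl⟩ := Submodule.mem_sup.1 hxc
    obtain ⟨s, rfl⟩ := mem_span_singleton.1 hu
    rcases eq_or_ne s 0 with rfl | hs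
    · rw [← hTL]
      exact ⟨by simpa using ht, by simpa using hxL⟩
    · refine absurd ?_ hcTL
      rw [show c = s⁻¹ • (-t + (t + s • c)) by simp [smul_smul, hs]]
      exact smul_mem _ _ (add_mem_sup (neg_mem ht) hxL)

section Symplectic

variable {n : ℕ}

lemma symp_comm (a b : V n) : symp a b = symp b a := by
  simp only [symp, mul_comm (a.1 _), mul_comm (a.2 _), add_comm]

lemma symp_self (a : V n) : symp a a = 0 := by
  simp only [symp, mul_comm (a.2 _)]
  exact CharTwo.add_self_eq_zero _

lemma symp_add_left (a b c : V n) : symp (a + b) c = symp a c + symp b c := by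
  simp only [symp, Prod.fst_add, Prod.snd_add, Pi.add_apply, add_mul, Finset.sum_add_distrib]
  ring

lemma symp_smul_left (t : F2) (a c : V n) : symp (t • a) c = t * symp a c := by
  simp only [symp, Prod.smul_fst, Prod.smul_snd, Pi.smul_apply, smul_eq_mul, mul_assoc,
    ← Finset.mul_sum, mul_add]

variable (n) in
noncomputable def sympForm : LinearMap.BilinForm F2 (V n) :=
  LinearMap.mk₂ F2 symp symp_add_left (fun t a c => by rw [symp_smul_left]; rfl)
    (fun a b c => by rw [symp_comm, symp_add_left, symp_comm b, symp_comm c])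
    (fun t a c => by rw [symp_comm, symp_smul_left, symp_comm]; rfl)

@[simp] lemma sympForm_apply (a b : V n) : sympForm n a b = symp a b := rfl

lemma sympForm_isRefl : (sympForm n).IsRefl := fun a b h => by
  rwa [sympForm_apply, symp_comm] at h

lemma sympForm_nondegenerate : (sympForm n).Nondegenerate := by
  refine (sympForm_isRefl.nondegenerate_iff_separatingLeft).2 fun a h => ?_
  ext i
  · simpa [symp, Pi.single_apply] using h (0, Pi.single i 1)
  · simpa [symp, Pi.single_apply] using h (Pi.single i 1, 0)

lemma finrank_V : finrank F2 (V n) = 2 * n := by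
  simp [two_mul]

noncomputable def perp (T : Submodule F2 (V n)) : Submodule F2 (V n) :=
  (sympForm n).orthogonal T

lemma mem_perp {T : Submodule F2 (V n)} {x : V n} : x ∈ perp T ↔ ∀ t ∈ T, symp t x = 0 :=
  Iff.rfl

lemma finrank_perp (T : Submodule F2 (V n)) : finrank F2 (perp T) = 2 * n - finrank F2 T := by
  rw [perp, LinearMap.BilinForm.finrank_orthogonal sympForm_nondegenerate, finrank_V]

lemma perp_sup (T U : Submodule F2 (V n)) : perp (T ⊔ U) = perp T ⊓ perp U := by
  refine le_antisymm (le_inf (LinearMap.BilinForm.orthogonal_le le_sup_left)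
    (LinearMap.BilinForm.orthogonal_le le_sup_right)) ?_
  rintro x ⟨hT, hU⟩ _ hv
  obtain ⟨t, ht, u, hu, rfl⟩ := Submodule.mem_sup.1 hv
  simp only [map_add, LinearMap.add_apply]
  rw [hT t ht, hU u hu, add_zero]

lemma IsIsotropic.le_perp {T : Submodule F2 (V n)} (hT : IsIsotropic T) : T ≤ perp T :=
  fun x hx => mem_perp.2 fun t ht => hT t ht x hx

lemma IsIsotropic.mono {T U : Submodule F2 (V n)} (hU : IsIsotropic U) (h : T ≤ U) :
    IsIsotropic T :=
  fun x hx y hy => hU x (h hx) y (h hy)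

lemma isIsotropic_bot : IsIsotropic (⊥ : Submodule F2 (V n)) := by
  intro x hx y _
  rw [(mem_bot F2).1 hx, ← sympForm_apply, map_zero, LinearMap.zero_apply]

lemma IsIsotropic.sup_span_singleton {T : Submodule F2 (V n)} (hT : IsIsotropic T) {c : V n}
    (hc : c ∈ perp T) : IsIsotropic (T ⊔ span F2 {c}) := by
  rintro _ hx _ hy
  obtain ⟨t, ht, _, hu, rfl⟩ := mem_sup.1 hx
  obtain ⟨t', ht', _, hu', rfl⟩ := mem_sup.1 hy
  obtain ⟨s, rfl⟩ := mem_span_singleton.1 hu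
  obtain ⟨s', rfl⟩ := mem_span_singleton.1 hu'
  have hct : ∀ t ∈ T, symp c t = 0 := fun t ht => by rw [symp_comm]; exact hc t ht
  simp only [← sympForm_apply, map_add, map_smul, LinearMap.add_apply, LinearMap.smul_apply]
  simp [hT t ht t' ht', hc t ht, hct t' ht', symp_self]

lemma IsLagrangian.perp_eq {L : Submodule F2 (V n)} (hL : IsLagrangian L) : perp L = L :=
  (eq_of_le_of_finrank_le hL.1.le_perp (by rw [finrank_perp, hL.2]; omega)).symm

lemma IsLagrangian.finrank_le_of_inf_eq_bot {L T : Submodule F2 (V n)} (hL : IsLagrangian L)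
    (hTL : T ⊓ L = ⊥) : finrank F2 T ≤ n := by
  have := finrank_sup_add_finrank_inf_eq T L
  have hle : finrank F2 (T ⊔ L : Submodule F2 (V n)) ≤ 2 * n :=
    finrank_V (n := n) ▸ Submodule.finrank_le _
  rw [hTL, finrank_bot, hL.2] at this
  omega

lemma finrank_perp_inf_sup {L T : Submodule F2 (V n)} (hL : IsLagrangian L)
    (hT : IsIsotropic T) (hTL : T ⊓ L = ⊥) :
    finrank F2 (perp T ⊓ (T ⊔ L) : Submodule F2 (V n)) = n := by
  have hk := hL.finrank_le_of_inf_eq_bot hTL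
  have hsup := finrank_sup_add_finrank_inf_eq T L
  rw [hTL, finrank_bot, hL.2] at hsup
  have hperp : finrank F2 (L ⊓ perp T : Submodule F2 (V n)) = n - finrank F2 T := by
    rw [← hL.perp_eq, ← perp_sup, finrank_perp, sup_comm]
    omega
  have hdisj : T ⊓ (L ⊓ perp T) = ⊥ := by
    rw [← inf_assoc, hTL, bot_inf_eq]
  have hsum := finrank_sup_add_finrank_inf_eq T (L ⊓ perp T)
  rw [hdisj, finrank_bot, hperp] at hsum
  rw [inf_comm, sup_inf_assoc_of_le L hT.le_perp]
  omega

lemma card_filter_mem (W : Submodule F2 (V n)) : #{x : V n | x ∈ W} = 2 ^ finrank F2 W := by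
  rw [← Fintype.card_subtype (α := V n) (· ∈ W), Module.card_eq_pow_finrank (K := F2), ZMod.card]

lemma card_filter_mem_and_not_mem {U W : Submodule F2 (V n)} (h : U ≤ W) :
    #{x : V n | x ∈ W ∧ x ∉ U} = 2 ^ finrank F2 W - 2 ^ finrank F2 U := by
  have hsub : ({x | x ∈ U} : Finset (V n)) ⊆ ({x | x ∈ W} : Finset (V n)) := by
    intro x
    simpa using @h x
  rw [← card_filter_mem, ← card_filter_mem, ← Finset.card_sdiff_of_subset hsub,
    ← Finset.filter_and_not]

lemma sum_sq_card_inf_eq_sum_sum (𝒜 : Finset (Submodule F2 (V n))) (W : Submodule F2 (V n)) :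
    ∑ S ∈ 𝒜, Nat.card (S ⊓ W : Submodule F2 (V n)) ^ 2
      = ∑ a ∈ {a | a ∈ W}, ∑ b ∈ {b | b ∈ W}, #{S ∈ 𝒜 | a ∈ S ∧ b ∈ S} := by
  have hcard : ∀ S : Submodule F2 (V n), Nat.card (S ⊓ W : Submodule F2 (V n))
      = ∑ a ∈ {a | a ∈ W}, if a ∈ S then 1 else 0 := by
    intro S
    rw [← Finset.card_filter, Finset.filter_filter, Nat.card_eq_fintype_card,
      Fintype.card_subtype]
    simp only [Submodule.mem_inf, and_comm]
  simp_rw [hcard, sq, Finset.sum_mul_sum, Finset.card_filter, ite_zero_mul_ite_zero, mul_one]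
  rw [Finset.sum_comm]
  exact Finset.sum_congr rfl fun a _ => Finset.sum_comm

lemma sum_ite_mem_ite_mem {U' U W : Submodule F2 (V n)} (h₁ : U' ≤ U) (h₂ : U ≤ W) (X Y : ℚ) :
    ∑ b ∈ {b | b ∈ W}, (if b ∈ U' then X else if b ∈ U then 0 else Y)
      = 2 ^ finrank F2 U' * X + (2 ^ finrank F2 W - 2 ^ finrank F2 U) * Y := by
  rw [Finset.sum_ite, Finset.sum_ite, Finset.sum_const_zero, zero_add, Finset.sum_const,
    Finset.sum_const, Finset.filter_filter, Finset.filter_filter, Finset.filter_filter,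
    nsmul_eq_mul, nsmul_eq_mul]
  have hU' : ({b | b ∈ W ∧ b ∈ U'} : Finset (V n)) = ({b | b ∈ U'} : Finset (V n)) := by
    ext b
    simpa using fun hb => h₂ (h₁ hb)
  have hU : ({b | b ∈ W ∧ b ∉ U' ∧ b ∉ U} : Finset (V n))
      = ({b | b ∈ W ∧ b ∉ U} : Finset (V n)) := by
    ext b
    simpa using fun _ hb hbU' => hb (h₁ hbU')
  rw [hU', hU, card_filter_mem, card_filter_mem_and_not_mem h₂,
    Nat.cast_sub (Nat.pow_le_pow_right two_pos (Submodule.finrank_mono h₂))]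
  push_cast
  rfl

end Symplectic

noncomputable def extensionCount (n m k : ℕ) : ℚ :=
  ∏ j ∈ Finset.Ico k m, ((2 : ℚ) ^ (2 * n - j) - 2 ^ n) / (2 ^ m - 2 ^ j)

noncomputable def extensionRatio (n m k : ℕ) : ℚ :=
  ∏ j ∈ Finset.range k, ((2 : ℚ) ^ m - 2 ^ j) / (2 ^ (2 * n - j) - 2 ^ n)

lemma two_pow_sub_two_pow_ne_zero {i j : ℕ} (h : i ≠ j) : (2 : ℚ) ^ i - 2 ^ j ≠ 0 :=
  sub_ne_zero.2 fun hij => h (Nat.pow_right_injective le_rfl (by exact_mod_cast hij))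

lemma two_pow_two_mul_sub_one {n : ℕ} (hn : 1 ≤ n) : (2 : ℚ) ^ (2 * n - 1) = 2 ^ n * 2 ^ n / 2 := by
  rw [pow_sub₀ _ two_ne_zero (by omega), two_mul, pow_add, pow_one, div_eq_mul_inv]

lemma extensionRatio_one (n m : ℕ) :
    extensionRatio n m 1 = ((2 : ℚ) ^ m - 1) / (2 ^ (2 * n) - 2 ^ n) := by
  simp [extensionRatio]

lemma extensionRatio_two (n m : ℕ) : extensionRatio n m 2
    = ((2 : ℚ) ^ m - 1) / (2 ^ (2 * n) - 2 ^ n) * ((2 ^ m - 2) / (2 ^ (2 * n - 1) - 2 ^ n)) := by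
  simp [extensionRatio, Finset.prod_range_succ, div_mul_div_comm]

section Extensions

variable {n : ℕ} (L₁ : Submodule F2 (V n)) (m : ℕ)

noncomputable def extensions (T : Submodule F2 (V n)) : Finset (Submodule F2 (V n)) :=
  {S | (IsIsotropic S ∧ finrank F2 S = m ∧ S ⊓ L₁ = ⊥) ∧ T ≤ S}

noncomputable def transverseDirections (T : Submodule F2 (V n)) : Finset (V n) :=
  {c | c ∈ perp T ∧ c ∉ T ⊔ L₁}

variable {L₁ m}

lemma mem_extensions {T S : Submodule F2 (V n)} :
    S ∈ extensions L₁ m T ↔ (IsIsotropic S ∧ finrank F2 S = m ∧ S ⊓ L₁ = ⊥) ∧ T ≤ S := by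
  simp [extensions]

lemma filter_mem_extensions (T : Submodule F2 (V n)) (c : V n) :
    {S ∈ extensions L₁ m T | c ∈ S} = extensions L₁ m (T ⊔ span F2 {c}) := by
  ext S
  simp [extensions, span_singleton_le_iff_mem, and_assoc]

lemma extensions_eq_empty_of_inf_ne_bot {T : Submodule F2 (V n)} (h : T ⊓ L₁ ≠ ⊥) :
    extensions L₁ m T = ∅ := by
  refine Finset.eq_empty_of_forall_notMem fun S hS => h ?_
  obtain ⟨⟨-, -, hSL⟩, hTS⟩ := mem_extensions.1 hS
  exact eq_bot_iff.2 (hSL ▸ inf_le_inf_right L₁ hTS)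

lemma extensions_eq_empty_of_lt_finrank {T : Submodule F2 (V n)} (h : m < finrank F2 T) :
    extensions L₁ m T = ∅ := by
  refine Finset.eq_empty_of_forall_notMem fun S hS => ?_
  obtain ⟨⟨-, hSm, -⟩, hTS⟩ := mem_extensions.1 hS
  have := Submodule.finrank_mono hTS
  omega

lemma extensions_of_finrank_eq {T : Submodule F2 (V n)} (hT : IsIsotropic T) (hTL : T ⊓ L₁ = ⊥)
    (h : finrank F2 T = m) : extensions L₁ m T = {T} := by
  ext S
  rw [mem_extensions, Finset.mem_singleton]
  constructor
  · rintro ⟨⟨-, hSm, -⟩, hTS⟩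
    exact (eq_of_le_of_finrank_le hTS (by omega)).symm
  · rintro rfl
    exact ⟨⟨hT, h, hTL⟩, le_rfl⟩

lemma mem_transverseDirections_of_mem {T S : Submodule F2 (V n)} {c : V n}
    (hS : S ∈ extensions L₁ m T) (hcS : c ∈ S) (hcT : c ∉ T) :
    c ∈ transverseDirections L₁ T := by
  obtain ⟨⟨hSi, -, hSL⟩, hTS⟩ := mem_extensions.1 hS
  have hcTS : (T ⊔ span F2 {c}) ⊓ L₁ = ⊥ :=
    eq_bot_iff.2 (hSL ▸ inf_le_inf_right L₁ (sup_le hTS ((span_singleton_le_iff_mem c S).2 hcS)))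
  simp only [transverseDirections, Finset.mem_filter, Finset.mem_univ, true_and]
  exact ⟨mem_perp.2 fun t ht => hSi t (hTS ht) c hcS,
    (sup_span_singleton_inf_eq_bot_iff (eq_bot_iff.2 (hcTS ▸ inf_le_inf_right L₁ le_sup_left))
      hcT).1 hcTS⟩

lemma card_transverseDirections (hL₁ : IsLagrangian L₁) {T : Submodule F2 (V n)}
    (hT : IsIsotropic T) (hTL : T ⊓ L₁ = ⊥) :
    #(transverseDirections L₁ T) = 2 ^ (2 * n - finrank F2 T) - 2 ^ n := by
  have hdirs : transverseDirections L₁ T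
      = ({c | c ∈ perp T ∧ c ∉ perp T ⊓ (T ⊔ L₁)} : Finset (V n)) := by
    ext c
    simp only [transverseDirections, Finset.mem_filter, Finset.mem_univ, true_and, mem_inf]
    tauto
  rw [hdirs, card_filter_mem_and_not_mem inf_le_left, finrank_perp,
    finrank_perp_inf_sup hL₁ hT hTL]

lemma card_extensions_mul_eq_sum (T : Submodule F2 (V n)) :
    #(extensions L₁ m T) * (2 ^ m - 2 ^ finrank F2 T)
      = ∑ c ∈ transverseDirections L₁ T, #(extensions L₁ m (T ⊔ span F2 {c})) := by
  have above : ∀ S ∈ extensions L₁ m T,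
      #{c ∈ transverseDirections L₁ T | c ∈ S} = 2 ^ m - 2 ^ finrank F2 T := by
    intro S hS
    obtain ⟨⟨-, hSm, -⟩, hTS⟩ := mem_extensions.1 hS
    rw [← hSm, ← card_filter_mem_and_not_mem hTS]
    congr 1
    ext c
    simp only [transverseDirections, Finset.mem_filter, Finset.mem_univ, true_and]
    exact ⟨fun ⟨⟨_, hc⟩, hcS⟩ => ⟨hcS, fun hcT => hc (mem_sup_left hcT)⟩,
      fun ⟨hcS, hcT⟩ => ⟨by simpa [transverseDirections] using
        mem_transverseDirections_of_mem hS hcS hcT, hcS⟩⟩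
  calc #(extensions L₁ m T) * (2 ^ m - 2 ^ finrank F2 T)
      = ∑ S ∈ extensions L₁ m T, #{c ∈ transverseDirections L₁ T | c ∈ S} := by
        rw [Finset.sum_congr rfl above, Finset.sum_const, smul_eq_mul]
    _ = ∑ c ∈ transverseDirections L₁ T, #{S ∈ extensions L₁ m T | c ∈ S} :=
        Finset.sum_card_bipartiteAbove_eq_sum_card_bipartiteBelow _
    _ = _ := by simp only [filter_mem_extensions]

theorem card_extensions_eq_extensionCount (hL₁ : IsLagrangian L₁) {T : Submodule F2 (V n)}
    (hT : IsIsotropic T) (hTL : T ⊓ L₁ = ⊥) (hTm : finrank F2 T ≤ m) :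
    (#(extensions L₁ m T) : ℚ) = extensionCount n m (finrank F2 T) := by
  obtain ⟨d, hd⟩ := Nat.exists_eq_add_of_le hTm
  induction d generalizing T with
  | zero =>
    have hTm : finrank F2 T = m := by omega
    rw [extensions_of_finrank_eq hT hTL hTm, extensionCount, hTm, Finset.Ico_self]
    simp
  | succ d ih =>
    have hkm : finrank F2 T < m := by omega
    have hkn := hL₁.finrank_le_of_inf_eq_bot hTL
    have hnext : ∀ c ∈ transverseDirections L₁ T, (#(extensions L₁ m (T ⊔ span F2 {c})) : ℚ)
        = extensionCount n m (finrank F2 T + 1) := by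
      intro c hc
      simp only [transverseDirections, Finset.mem_filter, Finset.mem_univ, true_and] at hc
      have hcT : c ∉ T := fun h => hc.2 (mem_sup_left h)
      have hrank := finrank_sup_span_singleton (K := F2) hcT
      rw [← hrank]
      exact ih (hT.sup_span_singleton hc.1) ((sup_span_singleton_inf_eq_bot_iff hTL hcT).2 hc.2)
        (by omega) (by omega)
    have key := congrArg (Nat.cast (R := ℚ)) (card_extensions_mul_eq_sum (L₁ := L₁) (m := m) T)
    rw [Nat.cast_mul, Nat.cast_sum, Finset.sum_congr rfl hnext, Finset.sum_const,
      card_transverseDirections hL₁ hT hTL, nsmul_eq_mul,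
      Nat.cast_sub (Nat.pow_le_pow_right two_pos hkm.le),
      Nat.cast_sub (Nat.pow_le_pow_right two_pos (by omega))] at key
    push_cast at key
    rw [extensionCount, Finset.prod_eq_prod_Ico_succ_bot hkm, ← extensionCount,
      div_mul_eq_mul_div, eq_div_iff (two_pow_sub_two_pow_ne_zero hkm.ne')]
    exact key

theorem card_extensions_eq_extensionRatio_mul (hL₁ : IsLagrangian L₁) {T : Submodule F2 (V n)}
    (hT : IsIsotropic T) (hTL : T ⊓ L₁ = ⊥) :
    (#(extensions L₁ m T) : ℚ) = extensionRatio n m (finrank F2 T) * #(extensions L₁ m ⊥) := by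
  by_cases hTm : finrank F2 T ≤ m
  · have hkn := hL₁.finrank_le_of_inf_eq_bot hTL
    rw [card_extensions_eq_extensionCount hL₁ hT hTL hTm,
      card_extensions_eq_extensionCount hL₁ isIsotropic_bot (bot_inf_eq L₁) (by simp), finrank_bot,
      extensionCount, extensionCount, ← Finset.range_eq_Ico,
      ← Finset.prod_range_mul_prod_Ico _ hTm, ← mul_assoc, extensionRatio,
      ← Finset.prod_mul_distrib, Finset.prod_eq_one (s := Finset.range _), one_mul]
    intro j hj
    rw [Finset.mem_range] at hj
    have hP := two_pow_sub_two_pow_ne_zero (show m ≠ j by omega)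
    have hQ := two_pow_sub_two_pow_ne_zero (show 2 * n - j ≠ n by omega)
    field_simp
  · rw [extensions_eq_empty_of_lt_finrank (not_le.1 hTm), extensionRatio,
      Finset.prod_eq_zero (Finset.mem_range.2 (not_le.1 hTm)) (by simp)]
    simp

lemma card_extensions_bot_pos (hL₁ : IsLagrangian L₁) (hm : m ≤ n) :
    0 < (#(extensions L₁ m ⊥) : ℚ) := by
  rw [card_extensions_eq_extensionCount hL₁ isIsotropic_bot (bot_inf_eq L₁) (by simp)]
  refine Finset.prod_pos fun j hj => div_pos ?_ ?_ <;> rw [Finset.mem_Ico] at hj <;>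
    exact sub_pos.2 (pow_lt_pow_right₀ one_lt_two (by omega))

variable {L₂ : Submodule F2 (V n)}

lemma card_extensions_sup_span_eq (hL₁ : IsLagrangian L₁) (hL₂ : IsLagrangian L₂)
    {U : Submodule F2 (V n)} (hUL₂ : U ≤ L₂) (hUL₁ : U ⊓ L₁ = ⊥) {b : V n} (hb : b ∈ L₂) :
    (#(extensions L₁ m (U ⊔ span F2 {b})) : ℚ)
      = if b ∈ U then (#(extensions L₁ m U) : ℚ) else if b ∈ U ⊔ L₁ ⊓ L₂ then 0
        else extensionRatio n m (finrank F2 U + 1) * #(extensions L₁ m ⊥) := by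
  split_ifs with hbU hbK
  · rw [sup_eq_left.2 ((span_singleton_le_iff_mem b U).2 hbU)]
  · rw [extensions_eq_empty_of_inf_ne_bot, Finset.card_empty, Nat.cast_zero]
    rw [Ne, sup_span_singleton_inf_eq_bot_iff hUL₁ hbU, not_not]
    exact sup_le_sup_left inf_le_left U hbK
  · have hbUL : b ∉ U ⊔ L₁ := fun h => hbK (sup_inf_assoc_of_le L₁ hUL₂ ▸ ⟨h, hb⟩)
    rw [card_extensions_eq_extensionRatio_mul hL₁
      (hL₂.1.mono (sup_le hUL₂ ((span_singleton_le_iff_mem b L₂).2 hb)))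
      ((sup_span_singleton_inf_eq_bot_iff hUL₁ hbU).2 hbUL), finrank_sup_span_singleton hbU]

lemma sum_card_extensions_sup_span (hL₁ : IsLagrangian L₁) (hL₂ : IsLagrangian L₂)
    {U : Submodule F2 (V n)} (hUL₂ : U ≤ L₂) (hUL₁ : U ⊓ L₁ = ⊥) :
    ∑ b ∈ {b | b ∈ L₂}, (#(extensions L₁ m (U ⊔ span F2 {b})) : ℚ)
      = 2 ^ finrank F2 U * #(extensions L₁ m U)
        + (2 ^ n - 2 ^ (finrank F2 U + finrank F2 ↥(L₁ ⊓ L₂)))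
          * (extensionRatio n m (finrank F2 U + 1) * #(extensions L₁ m ⊥)) := by
  have hUK : finrank F2 (U ⊔ L₁ ⊓ L₂ : Submodule F2 (V n))
      = finrank F2 U + finrank F2 ↥(L₁ ⊓ L₂) := by
    have := finrank_sup_add_finrank_inf_eq U (L₁ ⊓ L₂)
    rw [← inf_assoc, hUL₁, bot_inf_eq, finrank_bot] at this
    omega
  rw [Finset.sum_congr rfl fun b hb => card_extensions_sup_span_eq hL₁ hL₂ hUL₂ hUL₁
      (by simpa using hb),
    sum_ite_mem_ite_mem le_sup_left (sup_le hUL₂ inf_le_right), hL₂.2, hUK]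

theorem sum_sq_card_inf_eq (hL₁ : IsLagrangian L₁) (hL₂ : IsLagrangian L₂) :
    ∑ S ∈ extensions L₁ m ⊥, (Nat.card (S ⊓ L₂ : Submodule F2 (V n)) : ℚ) ^ 2
      = (1 + 3 * (2 ^ n - 2 ^ finrank F2 ↥(L₁ ⊓ L₂)) * extensionRatio n m 1
          + (2 ^ n - 2 ^ finrank F2 ↥(L₁ ⊓ L₂))
            * (2 ^ n - 2 ^ (finrank F2 ↥(L₁ ⊓ L₂) + 1)) * extensionRatio n m 2)
        * #(extensions L₁ m ⊥) := by
  set κ := finrank F2 ↥(L₁ ⊓ L₂) with hκ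
  set N₀ : ℚ := (#(extensions L₁ m ⊥) : ℚ) with hN₀
  have hinner : ∀ a ∈ ({a | a ∈ L₂} : Finset (V n)),
      ∑ b ∈ {b | b ∈ L₂}, (#(extensions L₁ m (span F2 {a} ⊔ span F2 {b})) : ℚ)
        = if a ∈ (⊥ : Submodule F2 (V n)) then N₀ + (2 ^ n - 2 ^ κ) * extensionRatio n m 1 * N₀
          else if a ∈ L₁ ⊓ L₂ then 0
          else 2 * extensionRatio n m 1 * N₀
            + (2 ^ n - 2 ^ (κ + 1)) * extensionRatio n m 2 * N₀ := by
    intro a ha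
    replace ha : a ∈ L₂ := by simpa using ha
    split_ifs with ha0 haK
    · rw [(mem_bot F2).1 ha0, span_zero_singleton,
        sum_card_extensions_sup_span hL₁ hL₂ bot_le (bot_inf_eq L₁), finrank_bot]
      ring
    · refine Finset.sum_eq_zero fun b _ => ?_
      rw [extensions_eq_empty_of_inf_ne_bot, Finset.card_empty, Nat.cast_zero]
      exact (Submodule.ne_bot_iff _).2
        ⟨a, ⟨mem_sup_left (mem_span_singleton_self a), haK.1⟩, by simpa using ha0⟩
    · have ha0' : a ≠ 0 := by simpa using ha0
      have haL₁ : a ∉ L₁ := fun h => haK ⟨h, ha⟩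
      have hspan : span F2 {a} ⊓ L₁ = ⊥ := by
        rw [inf_comm, ← disjoint_iff, disjoint_span_singleton' ha0']
        exact haL₁
      rw [sum_card_extensions_sup_span hL₁ hL₂ ((span_singleton_le_iff_mem a L₂).2 ha) hspan,
        finrank_span_singleton ha0', card_extensions_eq_extensionRatio_mul hL₁
          (hL₂.1.mono ((span_singleton_le_iff_mem a L₂).2 ha)) hspan, finrank_span_singleton ha0',
        ← hN₀, ← hκ]
      ring
  have hsum := congrArg (Nat.cast (R := ℚ)) (sum_sq_card_inf_eq_sum_sum (extensions L₁ m ⊥) L₂)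
  push_cast at hsum
  simp only [← Finset.filter_filter, filter_mem_extensions, bot_sup_eq] at hsum
  rw [hsum, Finset.sum_congr rfl hinner, sum_ite_mem_ite_mem bot_le inf_le_right, finrank_bot,
    hL₂.2]
  ring

end Extensions

lemma mu_eq {n : ℕ} (hn : 2 ≤ n) (κ m : ℕ) :
    mu n κ m = 1 + 3 * (2 ^ n - 2 ^ κ) * extensionRatio n m 1
      + (2 ^ n - 2 ^ κ) * (2 ^ n - 2 ^ (κ + 1)) * extensionRatio n m 2 := by
  have h2 : (2 : ℚ) ≠ 0 := two_ne_zero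
  have hy : (4 : ℚ) ≤ 2 ^ n := le_trans (by norm_num) (pow_le_pow_right₀ one_le_two hn)
  have hy0 : (2 : ℚ) ^ n ≠ 0 := by positivity
  have hy1 : (2 : ℚ) ^ n - 1 ≠ 0 := by intro h; linarith
  have hy2 : (2 : ℚ) ^ n - 2 ≠ 0 := by intro h; linarith
  rw [mu, extensionRatio_one, extensionRatio_two, two_pow_two_mul_sub_one (by omega), two_mul n,
    pow_add]
  simp only [zpow_sub₀ h2, zpow_add₀ h2, zpow_natCast, zpow_one, pow_succ]
  field_simp

lemma two_pow_sub_mul_extensionRatio_one_le {n κ m : ℕ} (hn : 1 ≤ n) (hm : m ≤ n) :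
    (2 ^ n - 2 ^ κ) * extensionRatio n m 1 ≤ (2 : ℚ) ^ m / 2 ^ n := by
  have hy : (2 : ℚ) ≤ 2 ^ n := le_self_pow₀ one_le_two (by omega)
  have hz : (1 : ℚ) ≤ 2 ^ κ := one_le_pow₀ one_le_two
  have hx : (1 : ℚ) ≤ 2 ^ m := one_le_pow₀ one_le_two
  have hxy : (2 : ℚ) ^ m ≤ 2 ^ n := pow_le_pow_right₀ one_le_two hm
  rw [extensionRatio_one, two_mul, pow_add, mul_div_assoc',
    div_le_div_iff₀ (by nlinarith) (by linarith)]
  nlinarith [mul_nonneg (by linarith : (0 : ℚ) ≤ 2 ^ n) (add_nonneg (sub_nonneg.2 hxy)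
    (mul_nonneg (by linarith : (0 : ℚ) ≤ 2 ^ κ) (sub_nonneg.2 hx)))]

lemma two_pow_sub_mul_two_pow_sub_mul_extensionRatio_two_le {n κ m : ℕ} (hn : 2 ≤ n)
    (hκ : κ ≤ n) :
    (2 ^ n - 2 ^ κ) * (2 ^ n - 2 ^ (κ + 1)) * extensionRatio n m 2
      ≤ 2 * ((2 : ℚ) ^ m / 2 ^ n) ^ 2 := by
  have hy : (4 : ℚ) ≤ 2 ^ n := le_trans (by norm_num) (pow_le_pow_right₀ one_le_two hn)
  have hz : (1 : ℚ) ≤ 2 ^ κ := one_le_pow₀ one_le_two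
  have hzy : (2 : ℚ) ^ κ ≤ 2 ^ n := pow_le_pow_right₀ one_le_two hκ
  have hx : (2 : ℚ) ^ m = 1 ∨ 2 ≤ (2 : ℚ) ^ m := by
    rcases m with _ | m
    · simp
    · exact Or.inr (le_self_pow₀ one_le_two (by omega))
  rw [extensionRatio_two, two_pow_two_mul_sub_one (by omega), two_mul n, pow_add 2 n n,
    pow_succ 2 κ]
  generalize (2 : ℚ) ^ m = x at *
  generalize (2 : ℚ) ^ n = y at *
  generalize (2 : ℚ) ^ κ = z at *
  have hP : 0 ≤ (x - 1) * (x - 2) := by rcases hx with rfl | hx <;> nlinarith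
  have hP' : (x - 1) * (x - 2) ≤ x ^ 2 := by rcases hx with rfl | hx <;> nlinarith
  have hQ : (y - z) * (y - z * 2) ≤ (y - 1) * (y - 2) := by nlinarith
  have hD : 0 < (y * y - y) * (y * y / 2 - y) := mul_pos (by nlinarith) (by nlinarith)
  calc (y - z) * (y - z * 2) * ((x - 1) / (y * y - y) * ((x - 2) / (y * y / 2 - y)))
      = (y - z) * (y - z * 2) * ((x - 1) * (x - 2)) / ((y * y - y) * (y * y / 2 - y)) := by
        rw [div_mul_div_comm, ← mul_div_assoc]
    _ ≤ (y - 1) * (y - 2) * x ^ 2 / ((y * y - y) * (y * y / 2 - y)) := by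
        gcongr
        nlinarith
    _ = 2 * (x / y) ^ 2 := by
        rw [div_eq_iff hD.ne']
        field_simp

lemma mu_le {n κ m : ℕ} (hn : 2 ≤ n) (hκ : κ ≤ n) (hm : m ≤ n) :
    mu n κ m ≤ 1 + 3 * (2 : ℚ) ^ ((m : ℤ) - n) + 2 ^ (2 * (m : ℤ) - 2 * n + 1) := by
  have h2 : (2 : ℚ) ≠ 0 := two_ne_zero
  rw [mu_eq hn, show 2 * (m : ℤ) - 2 * n + 1 = (m - n) + (m - n) + 1 by ring, zpow_add₀ h2,
    zpow_add₀ h2, zpow_sub₀ h2, zpow_natCast, zpow_natCast, zpow_one]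
  nlinarith [two_pow_sub_mul_extensionRatio_one_le (κ := κ) (by omega : 1 ≤ n) hm,
    two_pow_sub_mul_two_pow_sub_mul_extensionRatio_two_le (m := m) hn hκ]

/-- For Lagrangian `L₁, L₂ ⊂ 𝔽₂^{2n}` with `κ = dim(L₁ ∩ L₂)` and `0 ≤ m ≤ n`, the
average of `|S ∩ L₂|²` over all `m`-dimensional isotropic subspaces `S` with
`S ∩ L₁ = {0}` equals `μ(n,κ,m)`, and `μ(n,κ,m) ≤ 1 + 3·2^{m−n} + 2^{2m−2n+1}`. -/
theorem stmt5 (n m : ℕ) (hn : 2 ≤ n) (hm : m ≤ n)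
    (L₁ L₂ : Submodule F2 (V n)) (hL₁ : IsLagrangian L₁) (hL₂ : IsLagrangian L₂) :
    (∑ᶠ S ∈ {S : Submodule F2 (V n) |
          IsIsotropic S ∧ Module.finrank F2 S = m ∧ S ⊓ L₁ = ⊥},
        (Nat.card ↥(S ⊓ L₂) : ℚ) ^ 2)
        / (Nat.card {S : Submodule F2 (V n) //
            IsIsotropic S ∧ Module.finrank F2 S = m ∧ S ⊓ L₁ = ⊥} : ℚ)
      = mu n (Module.finrank F2 ↥(L₁ ⊓ L₂)) m
    ∧ mu n (Module.finrank F2 ↥(L₁ ⊓ L₂)) m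
        ≤ 1 + 3 * (2 : ℚ) ^ ((m : ℤ) - (n : ℤ)) +
            (2 : ℚ) ^ (2 * (m : ℤ) - 2 * (n : ℤ) + 1) := by
  have hκ : finrank F2 ↥(L₁ ⊓ L₂) ≤ n :=
    (Submodule.finrank_mono inf_le_left).trans hL₁.2.le
  refine ⟨?_, mu_le hn hκ hm⟩
  have hset : {S : Submodule F2 (V n) | IsIsotropic S ∧ finrank F2 S = m ∧ S ⊓ L₁ = ⊥}
      = (extensions L₁ m ⊥ : Set (Submodule F2 (V n))) := by
    ext S
    simp [extensions]
  have hcard : Nat.card {S : Submodule F2 (V n) //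
      IsIsotropic S ∧ finrank F2 S = m ∧ S ⊓ L₁ = ⊥} = #(extensions L₁ m ⊥) := by
    rw [Nat.card_eq_fintype_card, Fintype.card_subtype]
    congr 1
    ext S
    simp [extensions]
  rw [hset, finsum_mem_coe_finset, hcard, sum_sq_card_inf_eq hL₁ hL₂,
    mul_div_cancel_right₀ _ (card_extensions_bot_pos hL₁ hm).ne', mu_eq hn]
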